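/- Let q, z be complex numbers with |q| < 1 and |z| < 1, and let n ≥ 0 be an integer. Then Σ_{λ} z^{|λ|} q^{n(λ)} [n, λ] = (−z;q)_n / (z²;q)_n, where the sum is over all partitions λ (only those with λ₁ ≤ n contribute, by the convention on q-binomial coefficients). -/

import Mathlib

open scoped BigOperators Classical

/-- The finite q-Pochhammer symbol `(x;q)_n = ∏_{j=0}^{n-1} (1 - x q^j)`. -/
noncomputable def qPoch (x q : ℂ) (n : ℕ) : ℂ :=
  ∏ j ∈ Finset.range n, (1 - x * q ^ j)

/-- Partitions: weakly decreasing sequences of naturals with finitely many nonzero terms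
(index `i` carries `λ_{i+1}`). -/
def Ptn : Type :=
  {f : ℕ → ℕ // Antitone f ∧ ∃ N, ∀ i, N ≤ i → f i = 0}

/-- The size `|λ| = Σ_i λ_i` of a partition. -/
noncomputable def Ptn.size (L : Ptn) : ℕ := ∑' i, L.1 i

/-- `n(λ) = Σ_i λ_i (λ_i - 1) / 2`. -/
noncomputable def Ptn.nfun (L : Ptn) : ℕ := ∑' i, Nat.choose (L.1 i) 2

/-- The q-binomial coefficient `[n, λ] = (q)_n / ((q)_{n-λ₁} (q)_λ)` for a partition `λ`,
with the convention that it vanishes when `λ₁ > n`. -/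
noncomputable def qBinomP (q : ℂ) (n : ℕ) (L : Ptn) : ℂ :=
  if L.1 0 ≤ n then
    qPoch q q n / (qPoch q q (n - L.1 0) * ∏' i : ℕ, qPoch q q (L.1 i - L.1 (i + 1)))
  else 0

/-!
Splitting off the largest part `k` of `λ` factors `[n, λ]` as `[n, k] [k, λ']`, so the left side
`G n` satisfies `G n = ∑_{k ≤ n} z^k q^(k(k-1)/2) [n, k] G k`. The q-Chu–Vandermonde identity with
`a = b = -z` shows that `(-z;q)_n / (z²;q)_n` satisfies the same recursion; the diagonal coefficient
`z^n q^(n(n-1)/2)` is not `1` for `n ≥ 1`, and both sides are `1` at `n = 0`.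

The tsum converges because `|[n, λ]| ≤ |(q)_n| / (1 - |q|)^n` whenever `λ₁ ≤ n`, and the conjugate
partition embeds `{λ | λ₁ ≤ n}` into `ℕ^n` turning `|z|^|λ|` into a product of `n` geometric series.
-/

open Finset

section QPochhammer

variable {x q : ℂ}

@[simp]
lemma qPoch_zero (x q : ℂ) : qPoch x q 0 = 1 := prod_range_zero _

lemma qPoch_succ (x q : ℂ) (n : ℕ) : qPoch x q (n + 1) = qPoch x q n * (1 - x * q ^ n) :=
  prod_range_succ _ _

lemma qPoch_succ' (x q : ℂ) (n : ℕ) : qPoch x q (n + 1) = (1 - x) * qPoch (x * q) q n := by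
  simp only [qPoch, prod_range_succ', pow_zero, mul_one, pow_succ', mul_assoc, mul_left_comm x]
  ring

lemma qPoch_ne_zero (h : ∀ j, x * q ^ j ≠ 1) (n : ℕ) : qPoch x q n ≠ 0 :=
  prod_ne_zero_iff.2 fun j _ => sub_ne_zero.2 (h j).symm

lemma one_sub_norm_pow_le_norm_qPoch (hq : ‖q‖ < 1) (n : ℕ) :
    (1 - ‖q‖) ^ n ≤ ‖qPoch q q n‖ := by
  calc (1 - ‖q‖) ^ n = ∏ _j ∈ range n, (1 - ‖q‖) := by rw [prod_const, card_range]
    _ ≤ ‖qPoch q q n‖ := ?_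
  rw [qPoch, norm_prod]
  refine prod_le_prod (fun _ _ => by linarith) fun j _ => ?_
  calc 1 - ‖q‖ ≤ ‖(1 : ℂ)‖ - ‖q * q ^ j‖ := by
        rw [norm_one, norm_mul, norm_pow]
        nlinarith [norm_nonneg q, pow_le_one₀ (norm_nonneg q) hq.le (n := j)]
    _ ≤ ‖1 - q * q ^ j‖ := norm_sub_norm_le _ _

lemma qPoch_self_ne_zero (hq : ‖q‖ < 1) (n : ℕ) : qPoch q q n ≠ 0 :=
  norm_pos_iff.1 <| (pow_pos (by linarith) n).trans_le (one_sub_norm_pow_le_norm_qPoch hq n)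

end QPochhammer

noncomputable def qBinom (q : ℂ) (n k : ℕ) : ℂ :=
  if k ≤ n then qPoch q q n / (qPoch q q (n - k) * qPoch q q k) else 0

section QBinomial

variable {q : ℂ}

lemma qBinom_zero_right (hq : ∀ m, qPoch q q m ≠ 0) (n : ℕ) : qBinom q n 0 = 1 := by
  simp [qBinom, hq n]

lemma qBinom_self (hq : ∀ m, qPoch q q m ≠ 0) (n : ℕ) : qBinom q n n = 1 := by
  simp [qBinom, hq n]

lemma qBinom_of_lt {n k : ℕ} (h : n < k) : qBinom q n k = 0 := if_neg (by omega)

lemma qBinom_succ_succ (hq : ∀ m, qPoch q q m ≠ 0) (n k : ℕ) :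
    qBinom q (n + 1) (k + 1) = q ^ (k + 1) * qBinom q n (k + 1) + qBinom q n k := by
  rcases lt_trichotomy k n with hkn | rfl | hkn
  · obtain ⟨m, rfl⟩ := Nat.exists_eq_add_of_lt hkn
    have hsucc (j : ℕ) : qPoch q q j ≠ 0 ∧ 1 - q * q ^ j ≠ 0 := by
      simpa [qPoch_succ] using hq (j + 1)
    simp only [qBinom, if_pos (by omega : k + 1 ≤ k + m + 1 + 1),
      if_pos (by omega : k + 1 ≤ k + m + 1), if_pos (by omega : k ≤ k + m + 1),
      show k + m + 1 + 1 - (k + 1) = m + 1 by omega, show k + m + 1 - (k + 1) = m by omega,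
      show k + m + 1 - k = m + 1 by omega, qPoch_succ]
    field_simp [(hsucc m).1, (hsucc m).2, (hsucc k).1, (hsucc k).2]
    ring
  · rw [qBinom_self hq, qBinom_of_lt (by omega), qBinom_self hq]
    ring
  · rw [qBinom_of_lt (by omega), qBinom_of_lt (by omega), qBinom_of_lt hkn]
    ring

lemma sum_range_qBinom_succ_mul (hq : ∀ m, qPoch q q m ≠ 0) (n : ℕ) (w : ℕ → ℂ) :
    ∑ k ∈ range (n + 2), qBinom q (n + 1) k * w k
      = ∑ k ∈ range (n + 1), qBinom q n k * (q ^ k * w k + w (k + 1)) := by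
  have hshift : ∑ k ∈ range (n + 1), q ^ (k + 1) * qBinom q n (k + 1) * w (k + 1) + w 0
      = ∑ k ∈ range (n + 1), qBinom q n k * (q ^ k * w k) := by
    rw [sum_range_succ, sum_range_succ', qBinom_of_lt (Nat.lt_succ_self n), qBinom_zero_right hq]
    simp only [pow_succ, mul_zero, zero_mul, add_zero, pow_zero, one_mul]
    congr 1
    exact sum_congr rfl fun k _ => by ring
  rw [sum_range_succ', qBinom_zero_right hq]
  simp only [qBinom_succ_succ hq, add_mul, sum_add_distrib, mul_add, one_mul]
  rw [← hshift]
  ring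

end QBinomial

noncomputable def chuTerm (a b q : ℂ) (k : ℕ) : ℂ :=
  qPoch a q k * (-b) ^ k * q ^ k.choose 2 / qPoch (a * b) q k

lemma pow_mul_chuTerm_add_chuTerm_succ {a b q : ℂ} (hab : ∀ j, a * b * q ^ j ≠ 1) (k : ℕ) :
    q ^ k * chuTerm a b q k + chuTerm a b q (k + 1)
      = (1 - b) / (1 - a * b) * chuTerm a (b * q) q k := by
  have hC := qPoch_ne_zero hab k
  have h0 : 1 - a * b ≠ 0 := sub_ne_zero.2 (by simpa using (hab 0).symm)
  have hk : 1 - a * b * q ^ k ≠ 0 := sub_ne_zero.2 (hab k).symm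
  have hshift :
      qPoch (a * (b * q)) q k = qPoch (a * b) q k * (1 - a * b * q ^ k) / (1 - a * b) := by
    rw [eq_div_iff h0, ← qPoch_succ, qPoch_succ', mul_assoc, mul_comm]
  rw [chuTerm, chuTerm, chuTerm, hshift, qPoch_succ, qPoch_succ, Nat.choose_succ_succ',
    Nat.choose_one_right, pow_succ, pow_add, neg_mul_eq_neg_mul, mul_pow]
  generalize qPoch a q k = P, qPoch (a * b) q k = C, (-b) ^ k = B, q ^ k = Q at *
  rw [show a * b * Q = Q * a * b by ring] at *
  field_simp
  ring

/-- The q-Chu–Vandermonde identity. -/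
theorem sum_qBinom_mul_chuTerm {q a : ℂ} (hq : ∀ m, qPoch q q m ≠ 0) (n : ℕ) {b : ℂ}
    (hab : ∀ j, a * b * q ^ j ≠ 1) :
    ∑ k ∈ range (n + 1), qBinom q n k * chuTerm a b q k = qPoch b q n / qPoch (a * b) q n := by
  induction n generalizing b with
  | zero => simp [qBinom_zero_right hq, chuTerm]
  | succ n ih =>
    have hab' (j : ℕ) : a * (b * q) * q ^ j ≠ 1 := by
      have := hab (j + 1)
      rwa [pow_succ', ← mul_assoc, mul_assoc a b q] at this
    calc _ = ∑ k ∈ range (n + 1),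
            (1 - b) / (1 - a * b) * (qBinom q n k * chuTerm a (b * q) q k) := by
          rw [sum_range_qBinom_succ_mul hq]
          refine sum_congr rfl fun k _ => ?_
          rw [pow_mul_chuTerm_add_chuTerm_succ hab]
          ring
      _ = (1 - b) / (1 - a * b) * (qPoch (b * q) q n / qPoch (a * (b * q)) q n) := by
          rw [← mul_sum, ih hab']
      _ = _ := by rw [qPoch_succ' b, qPoch_succ' (a * b), mul_assoc a b q, div_mul_div_comm]

lemma card_filter_range_lt {a n : ℕ} (h : a ≤ n) : #{j ∈ range n | j < a} = a := by
  rw [show {j ∈ range n | j < a} = range a by ext; simp; omega, card_range]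

namespace Ptn

lemma apply_le_head (L : Ptn) (i : ℕ) : L.1 i ≤ L.1 0 := L.2.1 (Nat.zero_le i)

def tail (L : Ptn) : Ptn :=
  ⟨fun i => L.1 (i + 1), fun _ _ h => L.2.1 (Nat.succ_le_succ h),
    let ⟨N, hN⟩ := L.2.2; ⟨N, fun i hi => hN (i + 1) (by omega)⟩⟩

lemma tail_apply (L : Ptn) (i : ℕ) : L.tail.1 i = L.1 (i + 1) := rfl

def cons (k : ℕ) (M : Ptn) (h : M.1 0 ≤ k) : Ptn :=
  ⟨fun | 0 => k | i + 1 => M.1 i,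
    antitone_nat_of_succ_le fun | 0 => h | i + 1 => M.2.1 (Nat.le_succ i),
    let ⟨N, hN⟩ := M.2.2
    ⟨N + 1, fun | 0, h => (Nat.not_succ_le_zero N h).elim | i + 1, hi => hN i (by omega)⟩⟩

def consEquiv : (Σ k : ℕ, {M : Ptn // M.1 0 ≤ k}) ≃ Ptn where
  toFun p := cons p.1 p.2.1 p.2.2
  invFun L := ⟨L.1 0, L.tail, L.2.1 (Nat.zero_le 1)⟩
  left_inv _ := rfl
  right_inv _ := Subtype.ext <| funext fun | 0 => rfl | _ + 1 => rfl

@[to_additive]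
lemma multipliable_apply {α : Type*} [CommMonoid α] [TopologicalSpace α] {f : ℕ → ℕ → α}
    (L : Ptn) (hf : f 0 0 = 1) :
    Multipliable fun i => f (L.1 i) (L.1 (i + 1)) := by
  obtain ⟨N, hN⟩ := L.2.2
  refine multipliable_of_ne_finset_one (s := range N) fun i hi => ?_
  rw [mem_range, not_lt] at hi
  rw [hN i hi, hN (i + 1) (by omega), hf]

@[to_additive]
lemma tprod_eq_mul_tail {α : Type*} [CommMonoid α] [TopologicalSpace α] [ContinuousMul α]
    [T2Space α] {f : ℕ → ℕ → α} (L : Ptn) (hf : f 0 0 = 1) :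
    ∏' i, f (L.1 i) (L.1 (i + 1))
      = f (L.1 0) (L.1 1) * ∏' i, f (L.tail.1 i) (L.tail.1 (i + 1)) :=
  tprod_eq_zero_mul' (L.tail.multipliable_apply hf)

lemma size_eq_add_tail (L : Ptn) : L.size = L.1 0 + L.tail.size :=
  L.tsum_eq_add_tail (f := fun a _ => a) rfl

lemma nfun_eq_add_tail (L : Ptn) : L.nfun = (L.1 0).choose 2 + L.tail.nfun :=
  L.tsum_eq_add_tail (f := fun a _ => a.choose 2) rfl

lemma tprod_qPoch_ne_zero {q : ℂ} (hq : ∀ m, qPoch q q m ≠ 0) (L : Ptn) :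
    ∏' i, qPoch q q (L.1 i - L.1 (i + 1)) ≠ 0 := by
  obtain ⟨N, hN⟩ := L.2.2
  rw [tprod_eq_prod (s := range N) fun i hi => by
    rw [mem_range, not_lt] at hi
    rw [hN i hi, hN (i + 1) (by omega), Nat.sub_zero, qPoch_zero]]
  exact prod_ne_zero_iff.2 fun i _ => hq _

lemma qBinomP_eq_mul_tail {q : ℂ} (hq : ∀ m, qPoch q q m ≠ 0) (n : ℕ) (L : Ptn) :
    qBinomP q n L = qBinom q n (L.1 0) * qBinomP q (L.1 0) L.tail := by
  have htail : L.tail.1 0 ≤ L.1 0 := L.2.1 (Nat.zero_le 1)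
  rw [qBinomP, qBinomP, qBinom, if_pos htail, tail_apply,
    L.tprod_eq_mul_tail (f := fun a b => qPoch q q (a - b)) (qPoch_zero q q)]
  split_ifs
  · have := tprod_qPoch_ne_zero hq L.tail
    field_simp [hq n, hq (n - L.1 0), hq (L.1 0), hq (L.1 0 - L.1 1)]
  · rw [zero_mul]

lemma one_sub_norm_pow_le_norm_tprod_qPoch {q : ℂ} (hq : ‖q‖ < 1) (L : Ptn) :
    (1 - ‖q‖) ^ L.1 0 ≤ ‖∏' i, qPoch q q (L.1 i - L.1 (i + 1))‖ := by
  obtain ⟨N, hN⟩ := L.2.2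
  induction N generalizing L with
  | zero => simp [hN _ (Nat.zero_le _)]
  | succ N ih =>
    have h10 : L.1 1 ≤ L.1 0 := L.2.1 (Nat.zero_le 1)
    rw [L.tprod_eq_mul_tail (f := fun a b => qPoch q q (a - b)) (qPoch_zero q q), norm_mul,
      ← Nat.sub_add_cancel h10, pow_add, Nat.add_sub_cancel, ← L.tail_apply]
    exact mul_le_mul (one_sub_norm_pow_le_norm_qPoch hq _)
      (ih L.tail fun i hi => hN (i + 1) (by omega)) (pow_nonneg (by linarith) _) (norm_nonneg _)

lemma norm_qBinomP_le {q : ℂ} (hq : ‖q‖ < 1) (n : ℕ) (L : Ptn) :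
    ‖qBinomP q n L‖ ≤ ‖qPoch q q n‖ / (1 - ‖q‖) ^ n := by
  have hr : 0 < 1 - ‖q‖ := by linarith
  rw [qBinomP]
  split_ifs with h
  · rw [norm_div, norm_mul]
    refine div_le_div_of_nonneg_left (norm_nonneg _) (by positivity) ?_
    rw [← Nat.sub_add_cancel h, pow_add, Nat.add_sub_cancel]
    exact mul_le_mul (one_sub_norm_pow_le_norm_qPoch hq _)
      (one_sub_norm_pow_le_norm_tprod_qPoch hq L) (by positivity) (norm_nonneg _)
  · rw [norm_zero]
    positivity

lemma exists_apply_le (L : Ptn) (j : ℕ) : ∃ i, L.1 i ≤ j :=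
  let ⟨N, hN⟩ := L.2.2
  ⟨N, by rw [hN N le_rfl]; exact Nat.zero_le j⟩

/-- `L.conj j` is the number of parts of `L` exceeding `j`, i.e. the `(j + 1)`-st part of the
conjugate partition. -/
noncomputable def conj (L : Ptn) (j : ℕ) : ℕ := Nat.find (L.exists_apply_le j)

lemma lt_conj_iff (L : Ptn) {i j : ℕ} : i < L.conj j ↔ j < L.1 i := by
  rw [conj, Nat.lt_find_iff]
  exact ⟨fun h => not_le.1 (h i le_rfl), fun h m hm => not_le.2 (h.trans_le (L.2.1 hm))⟩

lemma conj_le (L : Ptn) {N : ℕ} (hN : L.1 N = 0) (j : ℕ) : L.conj j ≤ N :=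
  Nat.find_min' _ (by rw [hN]; exact Nat.zero_le j)

lemma size_eq_sum_conj (L : Ptn) {n : ℕ} (h : L.1 0 ≤ n) :
    L.size = ∑ j ∈ range n, L.conj j := by
  obtain ⟨N, hN⟩ := L.2.2
  rw [size, tsum_eq_sum (s := range N) fun i hi => hN i (by simpa using hi)]
  calc ∑ i ∈ range N, L.1 i
      = ∑ i ∈ range N, ∑ j ∈ range n, if j < L.1 i then 1 else 0 :=
        sum_congr rfl fun i _ => by
          rw [sum_boole, card_filter_range_lt ((L.apply_le_head i).trans h)]; rfl
    _ = ∑ j ∈ range n, ∑ i ∈ range N, if i < L.conj j then 1 else 0 := by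
        rw [sum_comm]; simp only [lt_conj_iff]
    _ = ∑ j ∈ range n, L.conj j :=
        sum_congr rfl fun j _ => by
          rw [sum_boole, card_filter_range_lt (L.conj_le (hN N le_rfl) j)]; rfl

lemma conj_injective (n : ℕ) :
    Function.Injective fun L : {L : Ptn // L.1 0 ≤ n} => fun j : Fin n => L.1.conj j := by
  have hrec (L : {L : Ptn // L.1 0 ≤ n}) (i : ℕ) :
      L.1.1 i = #{j ∈ range n | i < L.1.conj j} := by
    simp only [lt_conj_iff]
    rw [card_filter_range_lt ((L.1.apply_le_head i).trans L.2)]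
  intro L M hLM
  refine Subtype.ext <| Subtype.ext <| funext fun i => ?_
  rw [hrec L, hrec M]
  refine congrArg card (filter_congr fun j hj => ?_)
  rw [show L.1.conj j = M.1.conj j from congrFun hLM ⟨j, mem_range.1 hj⟩]

end Ptn

lemma summable_prod_pi_of_nonneg {ι : Type*} {f : ι → ℝ} (hf0 : 0 ≤ f) (hf : Summable f)
    (n : ℕ) :
    Summable fun v : Fin n → ι => ∏ j, f (v j) := by
  induction n with
  | zero => exact Summable.of_finite
  | succ n ih =>
    refine (Fin.consEquiv fun _ => ι).summable_iff.1 ?_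
    simpa [Function.comp_def, Fin.prod_univ_succ] using
      hf.mul_of_nonneg ih hf0 fun v => prod_nonneg fun j _ => hf0 (v j)

noncomputable def stembridgeTerm (q z : ℂ) (n : ℕ) (L : Ptn) : ℂ :=
  z ^ L.size * q ^ L.nfun * qBinomP q n L

section StembridgeTerm

variable {q z : ℂ}

lemma stembridgeTerm_eq_zero_of_lt {n : ℕ} {L : Ptn} (h : n < L.1 0) :
    stembridgeTerm q z n L = 0 := by
  rw [stembridgeTerm, qBinomP, if_neg h.not_ge, mul_zero]

lemma stembridgeTerm_eq_mul_tail (hq : ∀ m, qPoch q q m ≠ 0) (n : ℕ) (L : Ptn) :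
    stembridgeTerm q z n L
      = z ^ L.1 0 * q ^ (L.1 0).choose 2 * qBinom q n (L.1 0)
        * stembridgeTerm q z (L.1 0) L.tail := by
  rw [stembridgeTerm, stembridgeTerm, L.size_eq_add_tail, L.nfun_eq_add_tail,
    Ptn.qBinomP_eq_mul_tail hq, pow_add, pow_add]
  ring

lemma summable_stembridgeTerm (hq : ‖q‖ < 1) (hz : ‖z‖ < 1) (n : ℕ) :
    Summable (stembridgeTerm q z n) := by
  refine (Subtype.val_injective (p := fun L : Ptn => L.1 0 ≤ n)).summable_iff
    (fun L hL => stembridgeTerm_eq_zero_of_lt (not_le.1 fun h => hL ⟨⟨L, h⟩, rfl⟩)) |>.1 ?_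
  have hgeom := summable_prod_pi_of_nonneg (fun _ => pow_nonneg (norm_nonneg z) _)
    (summable_geometric_of_lt_one (norm_nonneg z) hz) n
  refine Summable.of_norm_bounded
    (((hgeom.comp_injective (Ptn.conj_injective n)).mul_left (‖qPoch q q n‖ / (1 - ‖q‖) ^ n))) ?_
  rintro ⟨L, hL⟩
  have hsize : ‖z‖ ^ L.size = ∏ j : Fin n, ‖z‖ ^ L.conj j := by
    rw [L.size_eq_sum_conj hL, ← prod_pow_eq_pow_sum, prod_range]
  calc ‖stembridgeTerm q z n L‖ = ‖z‖ ^ L.size * ‖q‖ ^ L.nfun * ‖qBinomP q n L‖ := by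
        rw [stembridgeTerm, norm_mul, norm_mul, norm_pow, norm_pow]
    _ ≤ ‖z‖ ^ L.size * 1 * (‖qPoch q q n‖ / (1 - ‖q‖) ^ n) := by
        gcongr
        · exact pow_le_one₀ (norm_nonneg q) hq.le
        · exact Ptn.norm_qBinomP_le hq n L
    _ = _ := by rw [hsize, mul_one, mul_comm]; rfl

lemma tsum_stembridgeTerm_zero : ∑' L, stembridgeTerm q z 0 L = 1 := by
  let O : Ptn := ⟨0, antitone_const, 0, fun _ _ => rfl⟩
  rw [tsum_eq_single O fun L hL => stembridgeTerm_eq_zero_of_lt ?_]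
  · simp [stembridgeTerm, Ptn.size, Ptn.nfun, qBinomP, O]
  · refine Nat.pos_of_ne_zero fun h0 => hL (Subtype.ext (funext fun i => ?_))
    exact Nat.le_zero.1 ((L.apply_le_head i).trans_eq h0)

lemma tsum_stembridgeTerm_eq_sum (hq : ‖q‖ < 1) (hz : ‖z‖ < 1) (n : ℕ) :
    ∑' L, stembridgeTerm q z n L
      = ∑ k ∈ range (n + 1),
          z ^ k * q ^ k.choose 2 * qBinom q n k * ∑' L, stembridgeTerm q z k L := by
  have hsum : Summable (stembridgeTerm q z n ∘ Ptn.consEquiv) :=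
    Ptn.consEquiv.summable_iff.2 (summable_stembridgeTerm hq hz n)
  have hcons (k : ℕ) (M : {M : Ptn // M.1 0 ≤ k}) :
      stembridgeTerm q z n (Ptn.consEquiv ⟨k, M⟩)
        = z ^ k * q ^ k.choose 2 * qBinom q n k * stembridgeTerm q z k M :=
    stembridgeTerm_eq_mul_tail (qPoch_self_ne_zero hq) n _
  have hfiber (k : ℕ) :
      ∑' M : {M : Ptn // M.1 0 ≤ k}, stembridgeTerm q z n (Ptn.consEquiv ⟨k, M⟩)
        = z ^ k * q ^ k.choose 2 * qBinom q n k * ∑' L, stembridgeTerm q z k L := by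
    simp only [hcons, tsum_mul_left]
    congr 1
    exact tsum_subtype_eq_of_support_subset fun M hM =>
      not_lt.1 fun h => hM (stembridgeTerm_eq_zero_of_lt h)
  calc ∑' L, stembridgeTerm q z n L
      = ∑' k, ∑' M : {M : Ptn // M.1 0 ≤ k}, stembridgeTerm q z n (Ptn.consEquiv ⟨k, M⟩) :=
        (Ptn.consEquiv.tsum_eq _).symm.trans hsum.tsum_sigma
    _ = _ := by
        simp only [hfiber]
        refine tsum_eq_sum fun k hk => ?_
        rw [qBinom_of_lt (by simpa using hk), mul_zero, zero_mul]

end StembridgeTerm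

lemma eq_of_eq_sum_range_mul {K : Type*} [Field K] {x y : ℕ → K} {c : ℕ → ℕ → K}
    (hc : ∀ n, c (n + 1) (n + 1) ≠ 1) (h0 : x 0 = y 0)
    (hx : ∀ n, x (n + 1) = ∑ k ∈ range (n + 2), c (n + 1) k * x k)
    (hy : ∀ n, y (n + 1) = ∑ k ∈ range (n + 2), c (n + 1) k * y k) : x = y := by
  funext n
  induction n using Nat.strong_induction_on with
  | _ n ih =>
    cases n with
    | zero => exact h0
    | succ n =>
      have hlower :
          ∑ k ∈ range (n + 1), c (n + 1) k * x k = ∑ k ∈ range (n + 1), c (n + 1) k * y k :=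
        sum_congr rfl fun k hk => by rw [ih k (by simp at hk; omega)]
      have hx' := hx n
      have hy' := hy n
      rw [sum_range_succ] at hx' hy'
      refine mul_left_cancel₀ (sub_ne_zero.2 (hc n).symm) ?_
      linear_combination hx' - hy' + hlower

lemma pow_mul_pow_ne_one {z q : ℂ} (hz : ‖z‖ < 1) (hq : ‖q‖ ≤ 1) {k : ℕ} (hk : k ≠ 0)
    (m : ℕ) :
    z ^ k * q ^ m ≠ 1 := by
  refine fun h => (lt_irrefl (1 : ℝ)) ?_
  calc (1 : ℝ) = ‖z ^ k * q ^ m‖ := by rw [h, norm_one]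
    _ = ‖z‖ ^ k * ‖q‖ ^ m := by rw [norm_mul, norm_pow, norm_pow]
    _ ≤ ‖z‖ ^ k := mul_le_of_le_one_right (by positivity) (pow_le_one₀ (norm_nonneg q) hq)
    _ < 1 := pow_lt_one₀ (norm_nonneg z) hz hk

lemma qPoch_neg_div_qPoch_sq_eq_sum {q z : ℂ} (hq : ∀ m, qPoch q q m ≠ 0)
    (hz : ∀ j, z ^ 2 * q ^ j ≠ 1) (n : ℕ) :
    qPoch (-z) q n / qPoch (z ^ 2) q n
      = ∑ k ∈ range (n + 1), z ^ k * q ^ k.choose 2 * qBinom q n k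
          * (qPoch (-z) q k / qPoch (z ^ 2) q k) := by
  have hsq : -z * -z = z ^ 2 := by ring
  rw [← hsq, ← sum_qBinom_mul_chuTerm hq n (by rwa [hsq])]
  refine sum_congr rfl fun k _ => ?_
  rw [chuTerm, neg_neg]
  ring

theorem stembridge_identity (q z : ℂ) (hq : ‖q‖ < 1) (hz : ‖z‖ < 1)
    (n : ℕ) :
    ∑' L : Ptn, z ^ L.size * q ^ L.nfun * qBinomP q n L
      = qPoch (-z) q n / qPoch (z ^ 2) q n := by
  have hqP := qPoch_self_ne_zero hq
  have hdiag (m : ℕ) : z ^ (m + 1) * q ^ (m + 1).choose 2 * qBinom q (m + 1) (m + 1) ≠ 1 := by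
    rw [qBinom_self hqP, mul_one]
    exact pow_mul_pow_ne_one hz hq.le m.succ_ne_zero _
  have hG := eq_of_eq_sum_range_mul (c := fun m k => z ^ k * q ^ k.choose 2 * qBinom q m k)
    (x := fun m => ∑' L, stembridgeTerm q z m L) (y := fun m => qPoch (-z) q m / qPoch (z ^ 2) q m)
    hdiag (by simp [tsum_stembridgeTerm_zero]) (fun m => tsum_stembridgeTerm_eq_sum hq hz (m + 1))
    fun m => qPoch_neg_div_qPoch_sq_eq_sum hqP (pow_mul_pow_ne_one hz hq.le two_ne_zero) (m + 1)
  exact congrFun hG n
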